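/- If for every interval J ⊂ I with |J| ≤ d_k at most one eigenvalue of H is localized in Λ_k(x) (for all k ≥ k₀ and all x), then every eigenvalue of H in I is simple, provided every eigenfunction has at least one localization center. -/
import Mathlib
set_option synthInstance.maxHeartbeats 1000000
set_option maxHeartbeats 1000000


/-- **Repulsion of localization centers implies simplicity of eigenvalues
(abstract Theorem 2 ⇒ simple spectrum).**
Let `T` be an operator on functions on `ℤ^d`, with localization centers
`X φ = {x : ‖φ x‖ = sup_y ‖φ y‖}`.  Assume every eigenfunction with eigenvalue in
`I` has at least one localization center, the boxes `Λ_k(x)` (of side `L k → ∞`)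
exhaust `ℤ^d`, and: for every `k ≥ k₀`, every `x`, and every interval `J ⊆ I` of
width at most `d_k`, at most one eigenvalue of `T` in `J` (counted with
multiplicity, i.e. any two such eigenfunctions are linearly dependent) is localized
in `Λ_k(x)`.  Then every eigenvalue of `T` in `I` is simple: each eigenspace has
dimension at most `1`. -/
theorem repulsion_implies_simple_spectrum
    (d : ℕ) (T : Module.End ℂ ((Fin d → ℤ) → ℂ)) (I : Set ℝ)
    (X : ((Fin d → ℤ) → ℂ) → Set (Fin d → ℤ))
    (hX : ∀ φ, X φ = {x | ‖φ x‖ = ⨆ y, ‖φ y‖})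
    (hcenter : ∀ (φ : (Fin d → ℤ) → ℂ) (E : ℝ),
      φ ≠ 0 → E ∈ I → T φ = (E : ℂ) • φ → (X φ).Nonempty)
    (L : ℕ → ℝ) (hL : Filter.Tendsto L Filter.atTop Filter.atTop)
    (dk : ℕ → ℝ) (hdk : ∀ k, 0 < dk k) (k₀ : ℕ)
    (hyp : ∀ k ≥ k₀, ∀ x : Fin d → ℤ, ∀ a b : ℝ, Set.Icc a b ⊆ I → b - a ≤ dk k →
      ∀ φ ψ : (Fin d → ℤ) → ℂ, ∀ E₁ ∈ Set.Icc a b, ∀ E₂ ∈ Set.Icc a b,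
        φ ≠ 0 → ψ ≠ 0 → T φ = (E₁ : ℂ) • φ → T ψ = (E₂ : ℂ) • ψ →
        (X φ ∩ {y | ∀ j, |(y j : ℝ) - (x j : ℝ)| ≤ L k / 2}).Nonempty →
        (X ψ ∩ {y | ∀ j, |(y j : ℝ) - (x j : ℝ)| ≤ L k / 2}).Nonempty →
        ¬ LinearIndependent ℂ ![φ, ψ]) :
    ∀ E ∈ I, Module.rank ℂ (Module.End.eigenspace T (E : ℂ)) ≤ 1 := by
  intro E hE
  rw [rank_le_one_iff]
  by_cases hzero : ∀ φ : (Fin d → ℤ) → ℂ, T φ = (E : ℂ) • φ → φ = 0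
  · refine ⟨0, fun v => ⟨0, ?_⟩⟩
    have := hzero v (Module.End.mem_eigenspace_iff.mp v.2)
    ext; simpa [this]
  · push_neg at hzero
    obtain ⟨φ, hφeig, hφ0⟩ := hzero
    have hφmem : φ ∈ Module.End.eigenspace T (E : ℂ) :=
      Module.End.mem_eigenspace_iff.mpr hφeig
    refine ⟨⟨φ, hφmem⟩, fun v => ?_⟩
    by_cases hv0 : (v : (Fin d → ℤ) → ℂ) = 0
    · exact ⟨0, by ext; simp [hv0]⟩
    · set ψ : (Fin d → ℤ) → ℂ := (v : (Fin d → ℤ) → ℂ) with hψ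
      have hψeig : T ψ = (E : ℂ) • ψ := Module.End.mem_eigenspace_iff.mp v.2
      obtain ⟨p, hp⟩ := hcenter φ E hφ0 hE hφeig
      obtain ⟨q, hq⟩ := hcenter ψ E hv0 hE hψeig
      -- choose k big enough
      set S : ℝ := ∑ j : Fin d, |((q j : ℝ)) - ((p j : ℝ))| with hS
      have hS0 : 0 ≤ S := Finset.sum_nonneg fun _ _ => abs_nonneg _
      obtain ⟨k, hLk, hk⟩ :=
        ((hL.eventually_ge_atTop (2 * S)).and (Filter.eventually_ge_atTop k₀)).exists
      have hbound : ∀ r : Fin d → ℤ,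
          (∀ j, |((r j : ℝ)) - ((p j : ℝ))| ≤ S) →
          ∀ j, |((r j : ℝ)) - ((p j : ℝ))| ≤ L k / 2 := by
        intro r hr j
        have := hr j
        linarith
      have hLI : ¬ LinearIndependent ℂ ![φ, ψ] := by
        refine hyp k hk p E E ?_ (by linarith [hdk k]) φ ψ E ?_ E ?_ hφ0 hv0 hφeig hψeig ?_ ?_
        · rw [Set.Icc_self]; simpa using hE
        · simp
        · simp
        · refine ⟨p, hp, fun j => ?_⟩
          simp only [sub_self, abs_zero]
          linarith
        · refine ⟨q, hq, hbound q (fun j => ?_) ⟩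
          exact Finset.single_le_sum (f := fun j => |((q j : ℝ)) - ((p j : ℝ))|)
            (fun _ _ => abs_nonneg _) (Finset.mem_univ j)
      rw [linearIndependent_fin2] at hLI
      push_neg at hLI
      obtain ⟨a, ha⟩ := hLI hv0
      have ha0 : a ≠ 0 := by
        rintro rfl
        simp at ha
        exact hφ0 ha.symm
      simp only [Matrix.cons_val_one, Matrix.head_cons, Matrix.cons_val_zero] at ha
      refine ⟨a⁻¹, ?_⟩
      ext1
      simp only [Submodule.coe_smul]
      rw [← ha, smul_smul, inv_mul_cancel₀ ha0, one_smul]
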